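/- arXiv:1604.00630 — 4 statements merged into one kernel-verified Lean document; each statement's English description precedes it below -/
import Mathlib

section
/- Let V and Ṽ be two smooth (or C¹) complete-enough vector fields on a manifold M, with flows X(s, X⁰) and X̃(s, X⁰) solving Ẋ = V(X), X(0) = X⁰ (respectively for Ṽ). Then for any t > 0 and initial condition X⁰ such that both flows exist on [0, t], one has X̃(t, X⁰) − X(t, X⁰) = ∫₀ᵗ (∂X̃/∂X⁰)(t − s, X(s, X⁰)) · (Ṽ − V)(X(s, X⁰)) ds, where ∂X̃/∂X⁰ denotes the derivative of the flow X̃ with respect to its initial condition. -/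
/-!
With `φ s = Y (t - s) (X s z₀)` one has `φ 0 = Y t z₀` and `φ t = X t z₀`, so the identity is the
fundamental theorem of calculus for `φ`. Writing `Y (t - s') = Y (t - s) ∘ Y (s - s')`, the
derivative of `φ` at `s` is `DY (t - s) (X s z₀)` applied to the derivative at `s` of
`s' ↦ Y (s - s') (X s' z₀)`, which is `V - W` at `X s z₀` because the flow is jointly continuous,
hence `Y τ a = a + τ • W x₀ + o(τ)` uniformly for `a` near `x₀`. The derivative is integrable
because it is bounded: by Grönwall, `Y τ` is Lipschitz near any point uniformly for `|τ| ≤ T`, and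
this bounds `‖DY τ ·‖` on compact sets.
-/

open Set Metric Filter Topology Real
open scoped NNReal

variable {E : Type*} [NormedAddCommGroup E] [NormedSpace ℝ E]

theorem ContDiff.exists_lipschitzOnWith_ball_of_isCompact {F : Type*} [NormedAddCommGroup F]
    [NormedSpace ℝ F] {f : E → F} (hf : ContDiff ℝ 1 f) {K : Set E} (hK : IsCompact K) :
    ∃ δ > 0, ∃ C : ℝ≥0, ∀ p ∈ K, LipschitzOnWith C f (ball p δ) := by
  have hcont : Continuous fun x => ‖fderiv ℝ f x‖ := (hf.continuous_fderiv one_ne_zero).norm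
  obtain ⟨C, hC⟩ := hK.exists_bound_of_continuousOn (hf.continuous_fderiv one_ne_zero).continuousOn
  obtain ⟨δ, hδ, hsub⟩ := hK.exists_thickening_subset_open (isOpen_lt hcont continuous_const)
    fun x hx => (hC x hx).trans_lt (lt_add_one C)
  refine ⟨δ, hδ, (C + 1).toNNReal, fun p hp => (convex_ball p δ).lipschitzOnWith_of_nnnorm_fderiv_le
    (fun x _ => (hf.differentiable one_ne_zero).differentiableAt) fun x hx => ?_⟩
  rw [← NNReal.coe_le_coe, coe_nnnorm]
  exact (hsub (ball_subset_thickening hp δ hx)).le.trans (le_coe_toNNReal _)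

theorem IsIntegralCurve.eq_of_locallyLipschitz {W : E → E} (hW : LocallyLipschitz W)
    {f g : ℝ → E} (hf : IsIntegralCurve f fun _ => W) (hg : IsIntegralCurve g fun _ => W)
    {t₀ : ℝ} (h : f t₀ = g t₀) : f = g := by
  have hopen : IsOpen {t | f t = g t} := isOpen_iff_mem_nhds.2 fun t (ht : f t = g t) => by
    obtain ⟨K, U, hU, hK⟩ := hW (f t)
    have hfU := hf.continuous.continuousAt.preimage_mem_nhds hU
    have hgU := hg.continuous.continuousAt.preimage_mem_nhds (ht ▸ hU)
    exact ODE_solution_unique_of_eventually (s := fun _ => U) (.of_forall fun _ => hK)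
      (eventually_of_mem hfU fun u hu => ⟨hf u, hu⟩)
      (eventually_of_mem hgU fun u hu => ⟨hg u, hu⟩) ht
  exact funext <| eq_univ_iff_forall.1 <|
    IsClopen.eq_univ ⟨isClosed_eq hf.continuous hg.continuous, hopen⟩ ⟨t₀, h⟩

theorem IsIntegralCurve.dist_le_dist_mul_exp {W : E → E} {f γ : ℝ → E} {T δ : ℝ} {K : ℝ≥0}
    (hf : IsIntegralCurve f fun _ => W) (hγ : IsIntegralCurve γ fun _ => W)
    (hW : ∀ u ∈ Icc 0 T, LipschitzOnWith K W (ball (γ u) δ))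
    (h0 : dist (f 0) (γ 0) * exp (K * T) < δ) :
    ∀ u ∈ Icc 0 T, dist (f u) (γ u) ≤ dist (f 0) (γ 0) * exp (K * u) := by
  set d := dist (f 0) (γ 0)
  have hcont : Continuous fun u => dist (f u) (γ u) := hf.continuous.dist hγ.continuous
  -- Continuous induction: Grönwall propagates the estimate while `f` stays in the tube.
  refine IsClosed.Icc_subset_of_forall_exists_gt (s := {u | dist (f u) (γ u) ≤ d * exp (K * u)})
    ((isClosed_le hcont (by fun_prop)).inter isClosed_Icc) (by simp [d]) ?_
  rintro x ⟨hxS : dist (f x) (γ x) ≤ d * exp (K * x), hx0, hxT⟩ y hy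
  have hx : dist (f x) (γ x) < δ := hxS.trans_lt <| (mul_le_mul_of_nonneg_left
    (exp_le_exp.2 (by gcongr)) dist_nonneg).trans_lt h0
  obtain ⟨ε, hε, hnear⟩ := Metric.eventually_nhds_iff.1
    (hcont.continuousAt.eventually (gt_mem_nhds hx))
  set y' := min (min y T) (x + ε / 2)
  have hxy' : x < y' := lt_min (lt_min hy hxT) (by linarith)
  have hy'T : y' ≤ T := (min_le_left _ _).trans (min_le_right _ _)
  have hy'ε : y' ≤ x + ε / 2 := min_le_right _ _
  have hδ : 0 < δ := dist_nonneg.trans_lt hx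
  have hgron := dist_le_of_trajectories_ODE_of_mem (v := fun _ => W) (s := fun u => ball (γ u) δ)
    (fun u hu => hW u ⟨hx0.trans hu.1, hu.2.le.trans hy'T⟩) hf.continuous.continuousOn
    (fun u _ => (hf u).hasDerivWithinAt)
    (fun u hu => hnear (by rw [Real.dist_eq, abs_of_nonneg (by linarith [hu.1])]; linarith [hu.2]))
    hγ.continuous.continuousOn (fun u _ => (hγ u).hasDerivWithinAt) (fun u _ => mem_ball_self hδ)
    hxS y' (right_mem_Icc.2 hxy'.le)
  refine ⟨y', ?_, hxy', (min_le_left _ _).trans (min_le_left _ _)⟩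
  show dist (f y') (γ y') ≤ d * exp (K * y')
  calc dist (f y') (γ y') ≤ d * exp (K * x) * exp (K * (y' - x)) := hgron
    _ = d * exp (K * y') := by rw [mul_assoc, ← exp_add]; ring_nf

theorem integral_eq_sub_of_hasDerivAt_of_norm_le [CompleteSpace E] {f f' : ℝ → E} {a b C : ℝ}
    (hf : ∀ x, HasDerivAt f (f' x) x) (hbound : ∀ x ∈ uIcc a b, ‖f' x‖ ≤ C) :
    ∫ x in a..b, f' x = f b - f a := by
  have hderiv : deriv f = f' := funext fun x => (hf x).deriv
  refine intervalIntegral.integral_eq_sub_of_hasDerivAt (fun x _ => hf x) ?_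
  refine (intervalIntegrable_const (c := C)).mono_fun' (hderiv ▸ aestronglyMeasurable_deriv f _) ?_
  exact MeasureTheory.ae_restrict_of_forall_mem measurableSet_uIoc fun x hx =>
    hbound x (uIoc_subset_uIcc hx)

structure IsFlow (W : E → E) (Y : ℝ → E → E) : Prop where
  zero : ∀ z, Y 0 z = z
  isIntegralCurve : ∀ z, IsIntegralCurve (fun τ => Y τ z) fun _ => W

namespace IsFlow

variable {W : E → E} {Y : ℝ → E → E}

theorem neg (hY : IsFlow W Y) : IsFlow (-W) fun τ => Y (-τ) where
  zero z := by simpa using hY.zero z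
  isIntegralCurve z τ := by
    simpa [Function.comp_def] using (hY.isIntegralCurve z (-τ)).scomp τ (hasDerivAt_neg τ)

theorem add (hW : LocallyLipschitz W) (hY : IsFlow W Y) (b a : ℝ) (z : E) :
    Y (b + a) z = Y b (Y a z) :=
  congrFun (((hY.isIntegralCurve z).comp_add a).eq_of_locallyLipschitz hW
    (hY.isIntegralCurve (Y a z)) (t₀ := 0) (by simp [hY.zero])) b

theorem exists_lipschitzOnWith_forward (hW : ContDiff ℝ 1 W) (hY : IsFlow W Y) (z : E) (T : ℝ) :
    ∃ ρ > 0, ∃ M : ℝ≥0, ∀ τ ∈ Icc 0 T, LipschitzOnWith M (Y τ) (closedBall z ρ) := by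
  obtain ⟨δ, hδ, K, hK⟩ := hW.exists_lipschitzOnWith_ball_of_isCompact
    (isCompact_Icc.image (hY.isIntegralCurve z).continuous)
  have hWγ : ∀ u ∈ Icc 0 T, LipschitzOnWith K W (ball (Y u z) δ) :=
    fun u hu => hK _ (mem_image_of_mem _ hu)
  set ρ := δ / 2 / exp (K * T)
  have hρ : ρ * exp (K * T) = δ / 2 := div_mul_cancel₀ _ (exp_pos _).ne'
  have hstay : ∀ a ∈ closedBall z ρ, ∀ u ∈ Icc 0 T, Y u a ∈ ball (Y u z) δ := by
    intro a ha u hu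
    have hdist : dist a z * exp (K * T) ≤ δ / 2 :=
      hρ ▸ mul_le_mul_of_nonneg_right (mem_closedBall.1 ha) (exp_pos _).le
    have h := (hY.isIntegralCurve a).dist_le_dist_mul_exp (hY.isIntegralCurve z) hWγ
      (by simp only [hY.zero]; linarith) u hu
    simp only [hY.zero] at h
    rw [mem_ball]
    calc dist (Y u a) (Y u z) ≤ dist a z * exp (K * T) :=
          h.trans (mul_le_mul_of_nonneg_left (exp_le_exp.2 (by gcongr; exact hu.2)) dist_nonneg)
      _ < δ := by linarith
  refine ⟨ρ, by positivity, (exp (K * T)).toNNReal, fun τ hτ =>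
    LipschitzOnWith.of_dist_le_mul fun a ha b hb => ?_⟩
  have hgron := dist_le_of_trajectories_ODE_of_mem (v := fun _ => W) (s := fun u => ball (Y u z) δ)
    (fun u hu => hWγ u ⟨hu.1, hu.2.le.trans hτ.2⟩) (hY.isIntegralCurve a).continuous.continuousOn
    (fun u _ => (hY.isIntegralCurve a u).hasDerivWithinAt)
    (fun u hu => hstay a ha u ⟨hu.1, hu.2.le.trans hτ.2⟩)
    (hY.isIntegralCurve b).continuous.continuousOn
    (fun u _ => (hY.isIntegralCurve b u).hasDerivWithinAt)
    (fun u hu => hstay b hb u ⟨hu.1, hu.2.le.trans hτ.2⟩)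
    (by simp only [hY.zero]; rfl) τ (right_mem_Icc.2 hτ.1)
  rw [coe_toNNReal _ (exp_pos _).le, mul_comm]
  refine hgron.trans (mul_le_mul_of_nonneg_left (exp_le_exp.2 ?_) dist_nonneg)
  simpa using mul_le_mul_of_nonneg_left hτ.2 K.coe_nonneg

theorem exists_lipschitzOnWith (hW : ContDiff ℝ 1 W) (hY : IsFlow W Y) (z : E) (T : ℝ) :
    ∃ ρ > 0, ∃ M : ℝ≥0, ∀ τ ∈ Icc (-T) T, LipschitzOnWith M (Y τ) (closedBall z ρ) := by
  obtain ⟨ρ₁, hρ₁, M₁, hM₁⟩ := hY.exists_lipschitzOnWith_forward hW z T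
  obtain ⟨ρ₂, hρ₂, M₂, hM₂⟩ := hY.neg.exists_lipschitzOnWith_forward hW.neg z T
  refine ⟨min ρ₁ ρ₂, lt_min hρ₁ hρ₂, max M₁ M₂, fun τ hτ => ?_⟩
  rcases le_total 0 τ with h | h
  · exact ((hM₁ τ ⟨h, hτ.2⟩).mono (closedBall_subset_closedBall (min_le_left _ _))).weaken
      (le_max_left _ _)
  · have := (hM₂ (-τ) ⟨neg_nonneg.2 h, neg_le.1 hτ.1⟩).mono
      (closedBall_subset_closedBall (min_le_right ρ₁ ρ₂))
    simpa using this.weaken (le_max_right M₁ M₂)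

theorem continuous_uncurry (hW : ContDiff ℝ 1 W) (hY : IsFlow W Y) :
    Continuous (Function.uncurry Y) := by
  refine continuous_iff_continuousAt.2 fun ⟨τ₀, x₀⟩ => ?_
  obtain ⟨ρ, hρ, M, hM⟩ := hY.exists_lipschitzOnWith hW x₀ (|τ₀| + 1)
  have htime : Tendsto (fun p : ℝ × E => Y p.1 x₀) (𝓝 (τ₀, x₀)) (𝓝 (Y τ₀ x₀)) :=
    ((hY.isIntegralCurve x₀).continuous.tendsto τ₀).comp continuousAt_fst
  have hτ : ∀ᶠ p : ℝ × E in 𝓝 (τ₀, x₀), p.1 ∈ Icc (-(|τ₀| + 1)) (|τ₀| + 1) :=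
    continuousAt_fst.eventually
      (Icc_mem_nhds (by linarith [neg_abs_le τ₀]) (by linarith [le_abs_self τ₀]))
  have hx : ∀ᶠ p : ℝ × E in 𝓝 (τ₀, x₀), p.2 ∈ closedBall x₀ ρ :=
    continuousAt_snd.eventually (closedBall_mem_nhds x₀ hρ)
  have hsmall : Tendsto (fun p : ℝ × E => (M : ℝ) * dist x₀ p.2) (𝓝 (τ₀, x₀)) (𝓝 0) :=
    (continuous_const.mul (continuous_const.dist continuous_snd)).tendsto' _ _ (by simp)
  refine htime.congr_dist (squeeze_zero' (.of_forall fun _ => dist_nonneg) ?_ hsmall)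
  filter_upwards [hτ, hx] with p hp1 hp2
  exact (hM p.1 hp1).dist_le_mul x₀ (mem_closedBall_self hρ.le) p.2 hp2

theorem isLittleO_apply_sub_sub_smul (hW : ContDiff ℝ 1 W) (hY : IsFlow W Y) (x₀ : E) :
    (fun p : ℝ × E => Y p.1 p.2 - p.2 - p.1 • W x₀) =o[𝓝 (0, x₀)] fun p => p.1 := by
  refine Asymptotics.isLittleO_iff.2 fun ε hε => ?_
  have hWY : Tendsto (fun p : ℝ × E => W (Y p.1 p.2)) (𝓝 (0, x₀)) (𝓝 (W x₀)) := by
    simpa [Function.comp_def, Function.uncurry_def, hY.zero] using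
      (hW.continuous.comp (hY.continuous_uncurry hW)).tendsto ((0 : ℝ), x₀)
  have hnear : ∀ᶠ p : ℝ × E in 𝓝 (0, x₀), dist (W (Y p.1 p.2)) (W x₀) ≤ ε :=
    hWY.eventually (closedBall_mem_nhds _ hε)
  obtain ⟨η, hη, hball⟩ := Metric.eventually_nhds_iff_ball.1 hnear
  filter_upwards [ball_mem_nhds _ hη] with p hp
  have hbound : ∀ u ∈ uIcc 0 p.1, ‖W (Y u p.2) - W x₀‖ ≤ ε := fun u hu => by
    rw [← dist_eq_norm]
    refine hball (u, p.2) ?_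
    rw [mem_ball, Prod.dist_eq] at hp ⊢
    refine lt_of_le_of_lt (max_le_max ?_ le_rfl) hp
    simpa [Real.dist_eq] using abs_sub_left_of_mem_uIcc hu
  have hderiv : ∀ u ∈ uIcc 0 p.1, HasDerivWithinAt (fun u => Y u p.2 - u • W x₀)
      (W (Y u p.2) - W x₀) (uIcc 0 p.1) u := fun u _ => by
    have := (hY.isIntegralCurve p.2 u).sub ((hasDerivAt_id' u).smul_const (W x₀))
    rw [one_smul] at this
    exact this.hasDerivWithinAt
  have hmv := (convex_uIcc 0 p.1).norm_image_sub_le_of_norm_hasDerivWithin_le hderiv hbound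
    left_mem_uIcc right_mem_uIcc
  convert hmv using 2
  · simp only [hY.zero, zero_smul, sub_zero]; abel
  · simp

theorem hasDerivAt_sub_apply (hW : ContDiff ℝ 1 W) (hY : IsFlow W Y) {c : ℝ → E} {v : E} {s : ℝ}
    (hc : HasDerivAt c v s) : HasDerivAt (fun s' => Y (s - s') (c s')) (v - W (c s)) s := by
  have hpath : Tendsto (fun s' => (s - s', c s')) (𝓝 s) (𝓝 (0, c s)) := by
    simpa using ((continuous_sub_left s).tendsto s).prodMk_nhds hc.continuousAt
  have hflow := ((hY.isLittleO_apply_sub_sub_smul hW (c s)).comp_tendsto hpath).trans_isBigO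
    (Asymptotics.isBigO_of_le (l := 𝓝 s) fun s' => (norm_sub_rev s s').le)
  refine hasDerivAt_iff_isLittleO.2 (((hasDerivAt_iff_isLittleO.1 hc).add hflow).congr_left
    fun s' => ?_)
  simp only [Function.comp_apply, sub_self, hY.zero, smul_sub, sub_smul]
  abel

theorem hasDerivAt_comp_sub_apply (hW : ContDiff ℝ 1 W) (hY : IsFlow W Y)
    {DY : ℝ → E → E →L[ℝ] E} (hDY : ∀ τ z, HasFDerivAt (Y τ) (DY τ z) z)
    {c : ℝ → E} {v : E} {s : ℝ} (hc : HasDerivAt c v s) (t : ℝ) :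
    HasDerivAt (fun s' => Y (t - s') (c s')) (DY (t - s) (c s) (v - W (c s))) s := by
  have hDYs : HasFDerivAt (Y (t - s)) (DY (t - s) (c s)) (Y (s - s) (c s)) := by
    rw [sub_self, hY.zero]; exact hDY _ _
  convert hDYs.comp_hasDerivAt s (hY.hasDerivAt_sub_apply hW hc) using 1
  funext s'
  rw [Function.comp_apply, ← hY.add hW.locallyLipschitz, sub_add_sub_cancel]

theorem exists_norm_le_of_isCompact (hW : ContDiff ℝ 1 W) (hY : IsFlow W Y)
    {DY : ℝ → E → E →L[ℝ] E} (hDY : ∀ τ z, HasFDerivAt (Y τ) (DY τ z) z)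
    {K : Set E} (hK : IsCompact K) (T : ℝ) :
    ∃ M, ∀ τ ∈ Icc (-T) T, ∀ z ∈ K, ‖DY τ z‖ ≤ M := by
  choose! ρ hρ M hM using fun z => hY.exists_lipschitzOnWith hW z T
  obtain ⟨F, -, hF⟩ := hK.elim_nhds_subcover (fun z => ball z (ρ z))
    fun z _ => ball_mem_nhds z (hρ z)
  refine ⟨∑ z ∈ F, (M z : ℝ), fun τ hτ w hw => ?_⟩
  obtain ⟨z, hzF, hwz⟩ := mem_iUnion₂.1 (hF hw)
  calc ‖DY τ w‖ ≤ M z := (hDY τ w).le_of_lipschitzOn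
        (mem_of_superset (isOpen_ball.mem_nhds hwz) ball_subset_closedBall) (hM z τ hτ)
    _ ≤ ∑ z ∈ F, (M z : ℝ) := Finset.single_le_sum (fun z _ => (M z).coe_nonneg) hzF

end IsFlow

theorem flow_difference_integral_general {n : ℕ}
    (V W : EuclideanSpace ℝ (Fin n) → EuclideanSpace ℝ (Fin n))
    (X Y : ℝ → EuclideanSpace ℝ (Fin n) → EuclideanSpace ℝ (Fin n))
    (DY : ℝ → EuclideanSpace ℝ (Fin n) →
      (EuclideanSpace ℝ (Fin n) →L[ℝ] EuclideanSpace ℝ (Fin n)))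
    (hV : ContDiff ℝ 1 V) (hW : ContDiff ℝ 1 W)
    (hX0 : ∀ z, X 0 z = z) (hY0 : ∀ z, Y 0 z = z)
    (hXflow : ∀ τ z, HasDerivAt (fun τ' => X τ' z) (V (X τ z)) τ)
    (hYflow : ∀ τ z, HasDerivAt (fun τ' => Y τ' z) (W (Y τ z)) τ)
    (hDY : ∀ τ z, HasFDerivAt (fun z' => Y τ z') (DY τ z) z)
    (t : ℝ) (z₀ : EuclideanSpace ℝ (Fin n)) :
    Y t z₀ - X t z₀
      = ∫ s in (0:ℝ)..t, DY (t - s) (X s z₀) (W (X s z₀) - V (X s z₀)) := by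
  have hY : IsFlow W Y := ⟨hY0, fun z τ => hYflow τ z⟩
  have hXc : Continuous (X · z₀) := IsIntegralCurve.continuous (v := fun _ => V) (hXflow · z₀)
  obtain ⟨M, hM⟩ := hY.exists_norm_le_of_isCompact hW hDY (isCompact_uIcc.image hXc) |t|
  obtain ⟨B, hB⟩ := (isCompact_uIcc (a := 0) (b := t)).exists_bound_of_continuousOn
    ((hV.continuous.comp hXc).sub (hW.continuous.comp hXc)).continuousOn
  have hτ : ∀ s ∈ uIcc 0 t, t - s ∈ Icc (-|t|) |t| := fun s hs =>
    abs_le.1 (by simpa using abs_sub_right_of_mem_uIcc hs)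
  have hbound : ∀ s ∈ uIcc 0 t,
      ‖DY (t - s) (X s z₀) (V (X s z₀) - W (X s z₀))‖ ≤ M * B := fun s hs => by
    have hDYs := hM _ (hτ s hs) _ (mem_image_of_mem _ hs)
    calc _ ≤ ‖DY (t - s) (X s z₀)‖ * ‖V (X s z₀) - W (X s z₀)‖ :=
          ContinuousLinearMap.le_opNorm _ _
      _ ≤ M * B := mul_le_mul hDYs (hB s hs) (norm_nonneg _) ((norm_nonneg _).trans hDYs)
  have hftc := integral_eq_sub_of_hasDerivAt_of_norm_le
    (fun s => hY.hasDerivAt_comp_sub_apply hW hDY (hXflow s z₀) t) hbound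
  simp only [sub_self, sub_zero, hY0, hX0] at hftc
  rw [← neg_sub, ← hftc, ← intervalIntegral.integral_neg]
  simp only [← map_neg, neg_sub]

/-- Pseudolinearization identity (Lemma 5.1): if `X`, `Y` are the flows of the `C¹` vector
fields `V`, `W` on ℝⁿ, and `DY τ z` denotes the derivative (Jacobian) of the time-`τ` flow map
`z ↦ Y τ z` with respect to the initial condition, then for any `t > 0` and initial condition
`z₀`,
`Y t z₀ − X t z₀ = ∫₀ᵗ DY (t−s) (X s z₀) ((W − V)(X s z₀)) ds`. -/
theorem flow_difference_integral {n : ℕ}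
    (V W : EuclideanSpace ℝ (Fin n) → EuclideanSpace ℝ (Fin n))
    (X Y : ℝ → EuclideanSpace ℝ (Fin n) → EuclideanSpace ℝ (Fin n))
    (DY : ℝ → EuclideanSpace ℝ (Fin n) →
      (EuclideanSpace ℝ (Fin n) →L[ℝ] EuclideanSpace ℝ (Fin n)))
    (hV : ContDiff ℝ 1 V) (hW : ContDiff ℝ 1 W)
    (hX0 : ∀ z, X 0 z = z) (hY0 : ∀ z, Y 0 z = z)
    (hXflow : ∀ τ z, HasDerivAt (fun τ' => X τ' z) (V (X τ z)) τ)
    (hYflow : ∀ τ z, HasDerivAt (fun τ' => Y τ' z) (W (Y τ z)) τ)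
    (hDY : ∀ τ z, HasFDerivAt (fun z' => Y τ z') (DY τ z) z)
    (t : ℝ) (ht : 0 < t) (z₀ : EuclideanSpace ℝ (Fin n)) :
    Y t z₀ - X t z₀
      = ∫ s in (0:ℝ)..t, DY (t - s) (X s z₀) (W (X s z₀) - V (X s z₀)) :=
  flow_difference_integral_general V W X Y DY hV hW hX0 hY0 hXflow hYflow hDY t z₀
end

section
/- Under the hypotheses of the pseudolinearization lemma, if two vector fields V and Ṽ on ℝⁿ have flows that agree at a particular endpoint, i.e., X̃(t, z₀) = X(t, z₀) for some initial condition z₀ and time t > 0 for which both flows exist on [0, t], then ∫₀ᵗ (∂X̃/∂X⁰)(t − s, X(s, z₀)) (Ṽ − V)(X(s, z₀)) ds = 0. -/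
/-! The curve `g s = Y (t - s) (X s z₀)` runs from `Y t z₀` to `X t z₀`, so when these agree the
integral of `g'` over `[0, t]` vanishes. By the group law `g σ = Y (s - σ) (Y (t - s) (X σ z₀))`,
so `g'(s)` is `DY (t - s) (X s z₀) (V (X s z₀)) - W (Y (t - s) (X s z₀))`; this needs the flow to be
jointly continuous at time `0` only, not jointly differentiable. Since the flow pushes `W`
forward to itself, `W (Y τ z) = DY τ z (W z)`, and `g'(s)` is the negative of the integrand. -/

open Set Filter Asymptotics Topology

variable {E : Type*} [NormedAddCommGroup E] [NormedSpace ℝ E]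

theorem norm_sub_le_of_norm_deriv_lt_Icc {φ ψ : ℝ → E} {p : E} {ρ M R T r : ℝ}
    (hφ : ∀ r, HasDerivAt φ (ψ r) r) (hψ : ∀ r, ‖φ r - p‖ ≤ R → ‖ψ r‖ < M) (hM : 0 ≤ M)
    (h0 : ‖φ 0 - p‖ ≤ ρ) (hT : ρ + M * T ≤ R) (hr : r ∈ Icc 0 T) :
    ‖φ r - p‖ ≤ R := by
  have hfence : ∀ r ∈ Icc 0 T, ‖φ r - p‖ ≤ ρ + M * r :=
    image_norm_le_of_norm_deriv_right_lt_deriv_boundary (f := fun r => φ r - p)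
      (fun r _ => ((hφ r).sub_const p).continuousAt.continuousWithinAt)
      (fun r _ => ((hφ r).sub_const p).hasDerivWithinAt) (by simpa using h0)
      (fun r => ((hasDerivAt_id r).const_mul M).const_add ρ)
      (fun r hr heq => by simpa using hψ r (heq.le.trans (by nlinarith [hr.2])))
  exact (hfence r hr).trans (by nlinarith [hr.2])

theorem norm_sub_le_of_norm_deriv_lt {φ ψ : ℝ → E} {p : E} {ρ M R T r : ℝ}
    (hφ : ∀ r, HasDerivAt φ (ψ r) r) (hψ : ∀ r, ‖φ r - p‖ ≤ R → ‖ψ r‖ < M) (hM : 0 ≤ M)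
    (h0 : ‖φ 0 - p‖ ≤ ρ) (hT : ρ + M * T ≤ R) (hr : |r| ≤ T) :
    ‖φ r - p‖ ≤ R := by
  rcases le_total 0 r with hr₀ | hr₀
  · exact norm_sub_le_of_norm_deriv_lt_Icc hφ hψ hM h0 hT ⟨hr₀, (le_abs_self r).trans hr⟩
  · have hφneg : ∀ r, HasDerivAt (fun r => φ (-r)) (-ψ (-r)) r := fun r => by
      simpa [Function.comp_def] using (hφ (-r)).scomp r (hasDerivAt_neg r)
    simpa using norm_sub_le_of_norm_deriv_lt_Icc (r := -r) hφneg
      (fun r h => by simpa using hψ (-r) h) hM (by simpa using h0) hT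
      ⟨by linarith, (neg_le_abs r).trans hr⟩

theorem continuousAt_uncurry_flow_zero {W : E → E} {Y : ℝ → E → E} {p : E}
    (hW : ContinuousAt W p) (hY0 : ∀ z, Y 0 z = z)
    (hYflow : ∀ τ z, HasDerivAt (fun τ' => Y τ' z) (W (Y τ z)) τ) :
    ContinuousAt (Function.uncurry Y) (0, p) := by
  rw [Metric.continuousAt_iff]
  intro ε hε
  obtain ⟨δ, hδ, hWδ⟩ := Metric.continuousAt_iff.1 hW 1 one_pos
  set R := min (δ / 2) (ε / 2)
  have hR : 0 < R := by positivity
  set M := ‖W p‖ + 1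
  have hWM : ∀ x, ‖x - p‖ ≤ R → ‖W x‖ < M := by
    intro x hx
    have hx' : ‖W x - W p‖ < 1 := by
      rw [← dist_eq_norm]
      exact hWδ (by rw [dist_eq_norm]; linarith [min_le_left (δ / 2) (ε / 2)])
    linarith [norm_le_norm_sub_add (W x) (W p)]
  refine ⟨min (R / 2) (R / (2 * M)), by positivity, fun {q} hq => ?_⟩
  rw [Prod.dist_eq, max_lt_iff, Real.dist_eq, sub_zero, dist_eq_norm] at hq
  have hT : R / 2 + M * (R / (2 * M)) ≤ R := by
    rw [mul_div_left_comm, div_mul_cancel_right₀ (by positivity)]; linarith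
  have hstay := norm_sub_le_of_norm_deriv_lt (hYflow · q.2) (fun r hr => hWM _ hr)
    (by positivity)
    (by rw [hY0]; exact hq.2.le.trans (min_le_left _ _)) hT (hq.1.le.trans (min_le_right _ _))
  change dist (Y q.1 q.2) (Y 0 p) < ε
  rw [hY0, dist_eq_norm]
  linarith [min_le_right (δ / 2) (ε / 2)]

theorem flow_sub_sub_smul_isLittleO {W : E → E} {Y : ℝ → E → E} {p : E}
    (hW : ContinuousAt W p) (hY0 : ∀ z, Y 0 z = z)
    (hYflow : ∀ τ z, HasDerivAt (fun τ' => Y τ' z) (W (Y τ z)) τ) :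
    (fun q : ℝ × E => Y q.1 q.2 - q.2 - q.1 • W p) =o[𝓝 (0, p)] Prod.fst := by
  rw [isLittleO_iff]
  intro c hc
  have hWY : ContinuousAt (fun q : ℝ × E => W (Y q.1 q.2)) (0, p) :=
    (show ContinuousAt W (Function.uncurry Y (0, p)) by simpa [hY0] using hW).comp
      (continuousAt_uncurry_flow_zero hW hY0 hYflow)
  obtain ⟨δ, hδ, hnear⟩ := Metric.continuousAt_iff.1 hWY c hc
  filter_upwards [Metric.ball_mem_nhds (0, p) hδ] with q hq
  rw [Metric.mem_ball, Prod.dist_eq, max_lt_iff] at hq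
  have hderiv : ∀ τ ∈ Metric.ball (0 : ℝ) δ, HasDerivWithinAt (fun τ => Y τ q.2 - τ • W p)
      (W (Y τ q.2) - W p) (Metric.ball 0 δ) τ := fun τ _ =>
    ((hYflow τ q.2).sub (by simpa using (hasDerivAt_id τ).smul_const (W p))).hasDerivWithinAt
  have hbound : ∀ τ ∈ Metric.ball (0 : ℝ) δ, ‖W (Y τ q.2) - W p‖ ≤ c := fun τ hτ => by
    have := hnear (x := (τ, q.2)) (by rw [Prod.dist_eq, max_lt_iff]; exact ⟨hτ, hq.2⟩)
    rw [hY0, dist_eq_norm] at this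
    exact this.le
  simpa [hY0, sub_sub, add_comm] using
    (convex_ball (0 : ℝ) δ).norm_image_sub_le_of_norm_hasDerivWithin_le hderiv hbound
      (Metric.mem_ball_self hδ) hq.1

theorem ODE_solution_eq_of_contDiff {W : E → E} (hW : ContDiff ℝ 1 W) {f g : ℝ → E}
    (hf : ∀ τ, HasDerivAt f (W (f τ)) τ) (hg : ∀ τ, HasDerivAt g (W (g τ)) τ)
    {t₀ : ℝ} (h0 : f t₀ = g t₀) : f = g := by
  have hfc : Continuous f := continuous_iff_continuousAt.2 fun τ => (hf τ).continuousAt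
  have hgc : Continuous g := continuous_iff_continuousAt.2 fun τ => (hg τ).continuousAt
  have hopen : IsOpen {τ | f τ = g τ} := by
    refine isOpen_iff_mem_nhds.2 fun τ₀ (hτ₀ : f τ₀ = g τ₀) => ?_
    obtain ⟨K, s, hs, hKs⟩ := (hW.contDiffAt (x := f τ₀)).exists_lipschitzOnWith
    refine ODE_solution_unique_of_eventually (v := fun _ => W) (s := fun _ => s)
      (Eventually.of_forall fun _ => hKs) ?_ ?_ hτ₀
    · filter_upwards [hfc.continuousAt.preimage_mem_nhds hs] with τ hτ using ⟨hf τ, hτ⟩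
    · filter_upwards [hgc.continuousAt.preimage_mem_nhds (hτ₀ ▸ hs)] with τ hτ using ⟨hg τ, hτ⟩
  have huniv : {τ | f τ = g τ} = univ := IsClopen.eq_univ ⟨isClosed_eq hfc hgc, hopen⟩ ⟨t₀, h0⟩
  exact funext fun τ => (huniv.symm ▸ mem_univ τ : τ ∈ {τ | f τ = g τ})

section Flow

variable {W : E → E} {Y : ℝ → E → E} {DY : ℝ → E → (E →L[ℝ] E)}

theorem flow_add (hW : ContDiff ℝ 1 W) (hY0 : ∀ z, Y 0 z = z)
    (hYflow : ∀ τ z, HasDerivAt (fun τ' => Y τ' z) (W (Y τ z)) τ) (a b : ℝ) (z : E) :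
    Y (a + b) z = Y a (Y b z) := by
  have hshift : ∀ τ, HasDerivAt (fun a => Y (a + b) z) (W (Y (τ + b) z)) τ := fun τ => by
    simpa [Function.comp_def] using (hYflow (τ + b) z).scomp τ ((hasDerivAt_id τ).add_const b)
  exact congrFun (ODE_solution_eq_of_contDiff hW hshift (hYflow · (Y b z)) (t₀ := 0)
    (by simp [hY0])) a

theorem flow_pushforward (hW : ContDiff ℝ 1 W) (hY0 : ∀ z, Y 0 z = z)
    (hYflow : ∀ τ z, HasDerivAt (fun τ' => Y τ' z) (W (Y τ z)) τ)
    (hDY : ∀ τ z, HasFDerivAt (Y τ) (DY τ z) z) (τ : ℝ) (z : E) :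
    W (Y τ z) = DY τ z (W z) := by
  have hshift : HasDerivAt (fun s => Y (τ + s) z) (W (Y τ z)) 0 := by
    simpa [Function.comp_def] using (hYflow (τ + 0) z).scomp 0 ((hasDerivAt_id 0).const_add τ)
  have hcomp : HasDerivAt (fun s => Y τ (Y s z)) (DY τ z (W z)) 0 := by
    simpa [hY0, Function.comp_def] using (hDY τ (Y 0 z)).comp_hasDerivAt 0 (hYflow 0 z)
  simp_rw [flow_add hW hY0 hYflow τ] at hshift
  exact hshift.unique hcomp

theorem hasDerivAt_flow_comp (hW : ContDiff ℝ 1 W) (hY0 : ∀ z, Y 0 z = z)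
    (hYflow : ∀ τ z, HasDerivAt (fun τ' => Y τ' z) (W (Y τ z)) τ)
    (hDY : ∀ τ z, HasFDerivAt (Y τ) (DY τ z) z) {a : ℝ → ℝ} {x : ℝ → E} {a' : ℝ} {x' : E}
    {s : ℝ} (ha : HasDerivAt a a' s) (hx : HasDerivAt x x' s) :
    HasDerivAt (fun σ => Y (a σ) (x σ)) (DY (a s) (x s) x' + a' • W (Y (a s) (x s))) s := by
  set p := Y (a s) (x s)
  set u := fun σ => Y (a s) (x σ)
  -- `Y (a σ) (x σ) = Y (a σ - a s) (u σ)`: a spatial step through `u`, then a short time step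
  -- whose expansion is uniform in its base point by `flow_sub_sub_smul_isLittleO`.
  have hu : HasDerivAt u (DY (a s) (x s) x') s := (hDY _ _).comp_hasDerivAt s hx
  have hlim : Tendsto (fun σ => (a σ - a s, u σ)) (𝓝 s) (𝓝 (0, p)) := by
    simpa [u, p] using ((ha.continuousAt.sub_const (a s)).prodMk_nhds hu.continuousAt)
  have hrem : HasDerivAt (fun σ => Y (a σ - a s) (u σ) - u σ - (a σ - a s) • W p) 0 s := by
    rw [hasDerivAt_iff_isLittleO]
    simpa [hY0, Function.comp_def] using ((flow_sub_sub_smul_isLittleO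
      hW.continuous.continuousAt hY0 hYflow).comp_tendsto hlim).trans_isBigO ha.isBigO_sub
  convert (hu.add ((ha.sub_const (a s)).smul_const (W p))).add hrem using 1
  · funext σ
    rw [Pi.add_apply, Pi.add_apply, ← flow_add hW hY0 hYflow, sub_add_cancel]
    abel
  · rw [add_zero]

end Flow

theorem intervalIntegral.integral_eq_zero_of_hasDerivAt_of_eq {F : Type*} [NormedAddCommGroup F]
    [NormedSpace ℝ F] [CompleteSpace F] {f f' : ℝ → F} {a b : ℝ}
    (hf : ∀ x ∈ uIcc a b, HasDerivAt f (f' x) x) (hab : f a = f b) :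
    ∫ x in a..b, f' x = 0 := by
  by_cases hint : IntervalIntegrable f' MeasureTheory.volume a b
  · rw [integral_eq_sub_of_hasDerivAt hf hint, hab, sub_self]
  · exact integral_undef hint

theorem flow_agree_integral_zero_general {n : ℕ}
    (V W : EuclideanSpace ℝ (Fin n) → EuclideanSpace ℝ (Fin n))
    (X Y : ℝ → EuclideanSpace ℝ (Fin n) → EuclideanSpace ℝ (Fin n))
    (DY : ℝ → EuclideanSpace ℝ (Fin n) →
      (EuclideanSpace ℝ (Fin n) →L[ℝ] EuclideanSpace ℝ (Fin n)))
    (hW : ContDiff ℝ 1 W)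
    (hX0 : ∀ z, X 0 z = z) (hY0 : ∀ z, Y 0 z = z)
    (hXflow : ∀ τ z, HasDerivAt (fun τ' => X τ' z) (V (X τ z)) τ)
    (hYflow : ∀ τ z, HasDerivAt (fun τ' => Y τ' z) (W (Y τ z)) τ)
    (hDY : ∀ τ z, HasFDerivAt (fun z' => Y τ z') (DY τ z) z)
    (t : ℝ) (z₀ : EuclideanSpace ℝ (Fin n))
    (hEq : Y t z₀ = X t z₀) :
    ∫ s in (0:ℝ)..t, DY (t - s) (X s z₀) (W (X s z₀) - V (X s z₀)) = 0 := by
  have hderiv : ∀ s, HasDerivAt (fun σ => -Y (t - σ) (X σ z₀))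
      (DY (t - s) (X s z₀) (W (X s z₀) - V (X s z₀))) s := fun s => by
    have := (hasDerivAt_flow_comp hW hY0 hYflow hDY ((hasDerivAt_id s).const_sub t)
      (hXflow s z₀)).neg
    rwa [flow_pushforward hW hY0 hYflow hDY, neg_one_smul, ← sub_eq_add_neg, ← map_sub,
      ← map_neg, neg_sub] at this
  exact intervalIntegral.integral_eq_zero_of_hasDerivAt_of_eq (fun s _ => hderiv s)
    (by simp [hX0, hY0, hEq])

/-- If the flows of two `C¹` vector fields `V`, `W` on ℝⁿ agree at an endpoint,
`Y t z₀ = X t z₀`, then the weighted integral of the difference of the vector fields along the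
flow of `V` vanishes:
`∫₀ᵗ DY (t−s) (X s z₀) ((W − V)(X s z₀)) ds = 0`. -/
theorem flow_agree_integral_zero {n : ℕ}
    (V W : EuclideanSpace ℝ (Fin n) → EuclideanSpace ℝ (Fin n))
    (X Y : ℝ → EuclideanSpace ℝ (Fin n) → EuclideanSpace ℝ (Fin n))
    (DY : ℝ → EuclideanSpace ℝ (Fin n) →
      (EuclideanSpace ℝ (Fin n) →L[ℝ] EuclideanSpace ℝ (Fin n)))
    (hV : ContDiff ℝ 1 V) (hW : ContDiff ℝ 1 W)
    (hX0 : ∀ z, X 0 z = z) (hY0 : ∀ z, Y 0 z = z)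
    (hXflow : ∀ τ z, HasDerivAt (fun τ' => X τ' z) (V (X τ z)) τ)
    (hYflow : ∀ τ z, HasDerivAt (fun τ' => Y τ' z) (W (Y τ z)) τ)
    (hDY : ∀ τ z, HasFDerivAt (fun z' => Y τ z') (DY τ z) z)
    (t : ℝ) (ht : 0 < t) (z₀ : EuclideanSpace ℝ (Fin n))
    (hEq : Y t z₀ = X t z₀) :
    ∫ s in (0:ℝ)..t, DY (t - s) (X s z₀) (W (X s z₀) - V (X s z₀)) = 0 :=
  flow_agree_integral_zero_general V W X Y DY hW hX0 hY0 hXflow hYflow hDY t z₀ hEq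
end

section
/- Let n ≥ 3 and let α : S^{n−2} → ℝ be a continuous function satisfying α(Ŷ) ≥ C₀ > 0 for all unit vectors Ŷ in S^{n−2} ⊂ ℝ^{n−1}. Define for η' ∈ ℝ^{n−1} the function φ(η') = ∫_{S^{n−2}} exp(−|η'·Ŷ|²/(4c α(Ŷ))) dŶ, where c > 0 is a constant. Then there exist constants c₁, c₂ > 0 such that c₁ ⟨η'⟩^{−1} ≤ φ(η') ≤ c₂ for all η' ∈ ℝ^{n−1}, where ⟨η'⟩ = (1 + |η'|²)^{1/2}. In particular |η'| φ(η') is bounded below by a positive constant for |η'| ≥ 1. -/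
/-!
The integrand lies in `(0, 1]`, so `φ` is at most the total mass of the sphere, and it is at least
`exp (-(4 c C₀)⁻¹)` on the band `|⟪η, Y⟫| ≤ 1`. It remains to bound the surface measure of that
band below by a multiple of `⟨η⟩⁻¹`. For `‖η‖ ≤ 1` the band is the whole sphere. Otherwise it is
the band `|⟪e, Y⟫| ≤ δ` with `e = η / ‖η‖`, `δ = ‖η‖⁻¹`, whose surface measure is `dim` times the
volume of the cone `(0, 1) • band`; in an orthonormal basis starting with `e` this cone contains
a box of width `δ` in the first coordinate and of fixed size in the others.
-/

open MeasureTheory Metric Set Module Real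
open scoped RealInnerProductSpace Pointwise

section SphereBand

variable {E : Type*} [NormedAddCommGroup E] [InnerProductSpace ℝ E]

theorem mem_Ioo_smul_sphere_band {e x : E} {δ : ℝ} (hx₁ : 1 / 2 ≤ ‖x‖) (hx₂ : ‖x‖ < 1)
    (hex : |⟪e, x⟫| ≤ δ / 2) :
    x ∈ Ioo (0 : ℝ) 1 • ((↑) '' {Y : sphere (0 : E) 1 | |⟪e, Y⟫| ≤ δ} : Set E) := by
  have hx₀ : 0 < ‖x‖ := by linarith
  refine mem_smul.2 ⟨‖x‖, ⟨hx₀, hx₂⟩, ‖x‖⁻¹ • x, ⟨⟨_, ?_⟩, ?_, rfl⟩, ?_⟩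
  · simp [norm_smul, hx₀.ne']
  · calc |⟪e, ‖x‖⁻¹ • x⟫| = ‖x‖⁻¹ * |⟪e, x⟫| := by
          rw [real_inner_smul_right, abs_mul, abs_of_pos (inv_pos.2 hx₀)]
      _ ≤ 2 * (δ / 2) := by
          gcongr
          rw [inv_le_comm₀ hx₀ two_pos]; linarith
      _ = δ := by ring
  · simp [smul_smul, hx₀.ne']

theorem measurableSet_sphere_band [MeasurableSpace E] [BorelSpace E] (e : E) (δ : ℝ) :
    MeasurableSet {Y : sphere (0 : E) 1 | |⟪e, Y⟫| ≤ δ} :=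
  (isClosed_le (by fun_prop) continuous_const).measurableSet

end SphereBand

theorem volume_preimage_ofLp_pi_cons {k : ℕ} (I J : Set ℝ) :
    volume ((WithLp.ofLp ⁻¹' univ.pi (Fin.cons I fun _ => J) :
      Set (EuclideanSpace ℝ (Fin (k + 1))))) = volume I * volume J ^ k := by
  rw [← MeasurableEquiv.coe_toLp_symm,
    (EuclideanSpace.volume_preserving_symm_measurableEquiv_toLp _).measure_preimage_equiv,
    volume_pi_pi, Fin.prod_univ_succ]
  simp

theorem norm_mem_Ico_of_mem_Icc_succ {k : ℕ} (hk : 1 ≤ k) {y : EuclideanSpace ℝ (Fin (k + 1))}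
    (h₀ : |y 0| ≤ 1 / 2) (hsucc : ∀ i : Fin k, y i.succ ∈ Icc (2 * √k)⁻¹ (3 * (4 * √k)⁻¹)) :
    ‖y‖ ∈ Ico (1 / 2) 1 := by
  have hk' : (0 : ℝ) < k := by exact_mod_cast hk
  have hsq : k * ((2 * √k)⁻¹) ^ 2 = 1 / 4 := by
    rw [inv_pow, mul_pow, sq_sqrt hk'.le]; field_simp; norm_num
  have hsq' : k * (3 * (4 * √k)⁻¹) ^ 2 = 9 / 16 := by
    rw [mul_pow, inv_pow, mul_pow, sq_sqrt hk'.le]; field_simp; norm_num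
  have hlow : k * ((2 * √k)⁻¹) ^ 2 ≤ ∑ i : Fin k, y i.succ ^ 2 := by
    simpa using Finset.card_nsmul_le_sum Finset.univ (fun i : Fin k => y i.succ ^ 2) _
      fun i _ => pow_le_pow_left₀ (by positivity) (hsucc i).1 2
  have hhigh : ∑ i : Fin k, y i.succ ^ 2 ≤ k * (3 * (4 * √k)⁻¹) ^ 2 := by
    simpa using Finset.sum_le_card_nsmul Finset.univ (fun i : Fin k => y i.succ ^ 2) _
      fun i _ => pow_le_pow_left₀ ((by positivity : (0 : ℝ) ≤ (2 * √k)⁻¹).trans (hsucc i).1)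
        (hsucc i).2 2
  have hnorm : ‖y‖ ^ 2 = y 0 ^ 2 + ∑ i : Fin k, y i.succ ^ 2 := by
    simp [EuclideanSpace.norm_sq_eq, Fin.sum_univ_succ]
  have hy₀ : y 0 ^ 2 ≤ 1 / 4 := by nlinarith [abs_nonneg (y 0), sq_abs (y 0)]
  rw [mem_Ico]
  constructor <;> nlinarith [norm_nonneg y, sq_nonneg (y 0)]

section FiniteDimensional

variable {E : Type*} [NormedAddCommGroup E] [InnerProductSpace ℝ E] [FiniteDimensional ℝ E]

theorem exists_orthonormalBasis_apply_zero_eq {k : ℕ} (hE : finrank ℝ E = k + 1) {e : E}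
    (he : ‖e‖ = 1) : ∃ b : OrthonormalBasis (Fin (k + 1)) ℝ E, b 0 = e := by
  have horth : Orthonormal ℝ (({0} : Set (Fin (k + 1))).domRestrict fun _ => e) :=
    ⟨fun _ => he, fun i j hij => absurd (Subsingleton.elim i j) hij⟩
  obtain ⟨b, hb⟩ := horth.exists_orthonormalBasis_extension_of_card_eq (by simpa using hE)
  exact ⟨b, hb 0 rfl⟩

variable [MeasurableSpace E] [BorelSpace E]

theorem ofReal_le_toSphere_band {k : ℕ} (hk : 1 ≤ k) (hE : finrank ℝ E = k + 1) {e : E}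
    (he : ‖e‖ = 1) {δ : ℝ} (hδ₀ : 0 ≤ δ) (hδ₁ : δ ≤ 1) :
    ENNReal.ofReal ((k + 1) * (4 * √k)⁻¹ ^ k * δ)
      ≤ (volume : Measure E).toSphere {Y : sphere (0 : E) 1 | |⟪e, Y⟫| ≤ δ} := by
  obtain ⟨b, hb⟩ := exists_orthonormalBasis_apply_zero_eq hE he
  set box : Set (EuclideanSpace ℝ (Fin (k + 1))) := WithLp.ofLp ⁻¹'
    univ.pi (Fin.cons (Icc (-(δ / 2)) (δ / 2)) fun _ => Icc (2 * √k)⁻¹ (3 * (4 * √k)⁻¹))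
  have hbox : b.repr ⁻¹' box
      ⊆ Ioo (0 : ℝ) 1 • ((↑) '' {Y : sphere (0 : E) 1 | |⟪e, Y⟫| ≤ δ} : Set E) := by
    intro x hx
    simp only [box, mem_preimage, mem_univ_pi, Fin.forall_fin_succ, Fin.cons_zero,
      Fin.cons_succ] at hx
    have h₀ : |b.repr x 0| ≤ δ / 2 := abs_le.2 hx.1
    obtain ⟨h₁, h₂⟩ := norm_mem_Ico_of_mem_Icc_succ hk (h₀.trans (by linarith)) hx.2
    rw [b.repr.norm_map] at h₁ h₂
    exact mem_Ioo_smul_sphere_band h₁ h₂ (by rwa [← hb, ← b.repr_apply_apply])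
  have hwidth : 3 * (4 * √k)⁻¹ - (2 * √k)⁻¹ = (4 * √k)⁻¹ := by
    field_simp; ring
  calc ENNReal.ofReal ((k + 1) * (4 * √k)⁻¹ ^ k * δ)
      = (k + 1) * volume (b.repr ⁻¹' box) := by
        rw [show ⇑b.repr ⁻¹' box = b.measurableEquiv ⁻¹' box from rfl,
          b.measurePreserving_measurableEquiv.measure_preimage_equiv,
          volume_preimage_ofLp_pi_cons, Real.volume_Icc, Real.volume_Icc, hwidth,
          sub_neg_eq_add, add_halves, ← ENNReal.ofReal_pow (by positivity),
          ← ENNReal.ofReal_mul hδ₀, mul_comm δ, mul_assoc, ENNReal.ofReal_mul (by positivity)]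
        norm_cast
    _ ≤ (k + 1) * volume (Ioo (0 : ℝ) 1 • ((↑) '' {Y : sphere (0 : E) 1 | |⟪e, Y⟫| ≤ δ} :
          Set E)) := by
        gcongr
    _ = _ := by
        rw [Measure.toSphere_apply' _ (measurableSet_sphere_band e δ), hE]
        push_cast; rfl

theorem ofReal_div_le_toSphere_inner_le_one {k : ℕ} (hk : 1 ≤ k) (hE : finrank ℝ E = k + 1)
    (η : E) :
    ENNReal.ofReal ((k + 1) * (4 * √k)⁻¹ ^ k / √(1 + ‖η‖ ^ 2))
      ≤ (volume : Measure E).toSphere {Y : sphere (0 : E) 1 | |⟪η, Y⟫| ≤ 1} := by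
  have hκ : 0 ≤ (k + 1) * (4 * √k)⁻¹ ^ k := by positivity
  rcases le_total ‖η‖ 1 with hη | hη
  · have : Nontrivial E := Module.nontrivial_of_finrank_eq_succ hE
    obtain ⟨e, he⟩ := exists_norm_eq E zero_le_one
    calc ENNReal.ofReal ((k + 1) * (4 * √k)⁻¹ ^ k / √(1 + ‖η‖ ^ 2))
        ≤ ENNReal.ofReal ((k + 1) * (4 * √k)⁻¹ ^ k * 1) := by
          rw [mul_one]
          exact ENNReal.ofReal_le_ofReal (div_le_self hκ (one_le_sqrt.2 (by nlinarith)))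
      _ ≤ _ := ofReal_le_toSphere_band hk hE he zero_le_one le_rfl
      _ ≤ _ := measure_mono fun Y _ => by
          simpa [norm_eq_of_mem_sphere Y] using
            (abs_real_inner_le_norm η Y).trans (by simpa using hη)
  · have hη₀ : 0 < ‖η‖ := by linarith
    calc ENNReal.ofReal ((k + 1) * (4 * √k)⁻¹ ^ k / √(1 + ‖η‖ ^ 2))
        ≤ ENNReal.ofReal ((k + 1) * (4 * √k)⁻¹ ^ k * ‖η‖⁻¹) := by
          rw [← div_eq_mul_inv]
          exact ENNReal.ofReal_le_ofReal
            (div_le_div_of_nonneg_left hκ hη₀ (le_sqrt_of_sq_le (by linarith)))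
      _ ≤ (volume : Measure E).toSphere {Y : sphere (0 : E) 1 | |⟪‖η‖⁻¹ • η, Y⟫| ≤ ‖η‖⁻¹} :=
          ofReal_le_toSphere_band hk hE (by simp [norm_smul, hη₀.ne']) (by positivity)
            (inv_le_one_of_one_le₀ hη)
      _ ≤ _ := measure_mono fun Y hY => by
          simp only [mem_ofPred_eq, real_inner_smul_left, abs_mul, abs_inv, abs_norm] at hY ⊢
          exact le_of_mul_le_mul_left (by simpa using hY) (inv_pos.2 hη₀)

end FiniteDimensional

theorem exp_neg_inv_le_exp_neg_sq_div {c C₀ a t : ℝ} (hc : 0 < c) (hC₀ : 0 < C₀) (ha : C₀ ≤ a)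
    (ht : |t| ≤ 1) : exp (-(4 * c * C₀)⁻¹) ≤ exp (-t ^ 2 / (4 * c * a)) := by
  rw [exp_le_exp, neg_div, neg_le_neg_iff, inv_eq_one_div]
  have ht' : t ^ 2 ≤ 1 := by nlinarith [sq_abs t, abs_nonneg t]
  exact div_le_div₀ zero_le_one ht' (by positivity) (by gcongr)

section GaussianAverage

variable {E : Type*} [NormedAddCommGroup E] [InnerProductSpace ℝ E] [FiniteDimensional ℝ E]
  [MeasurableSpace E] [BorelSpace E] {c C₀ : ℝ} {α : sphere (0 : E) 1 → ℝ}

theorem integrable_exp_neg_inner_sq_div (hc : c ≠ 0) (hα : Continuous α) (hα₀ : ∀ Y, α Y ≠ 0)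
    (η : E) :
    Integrable (fun Y : sphere (0 : E) 1 => exp (-⟪η, Y⟫ ^ 2 / (4 * c * α Y)))
      (volume : Measure E).toSphere := by
  have hcont : Continuous fun Y : sphere (0 : E) 1 => exp (-⟪η, Y⟫ ^ 2 / (4 * c * α Y)) := by
    fun_prop (disch := simp [hc, hα₀])
  exact integrableOn_univ.1 (hcont.continuousOn.integrableOn_compact isCompact_univ)

theorem integral_exp_neg_inner_sq_div_le (hc : 0 ≤ c) (hα₀ : ∀ Y, 0 ≤ α Y) (η : E) :
    ∫ Y, exp (-⟪η, (Y : E)⟫ ^ 2 / (4 * c * α Y)) ∂(volume : Measure E).toSphere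
      ≤ (volume : Measure E).toSphere.real univ := by
  have hle : ∀ Y : sphere (0 : E) 1, exp (-⟪η, (Y : E)⟫ ^ 2 / (4 * c * α Y)) ≤ 1 := fun Y =>
    exp_le_one_iff.2 (div_nonpos_of_nonpos_of_nonneg (neg_nonpos.2 (sq_nonneg _))
      (by have := hα₀ Y; positivity))
  simpa using integral_mono_of_nonneg (.of_forall fun _ => (exp_pos _).le)
    (integrable_const (μ := (volume : Measure E).toSphere) (1 : ℝ)) (.of_forall hle)

theorem div_le_integral_exp_neg_inner_sq_div {k : ℕ} (hk : 1 ≤ k) (hE : finrank ℝ E = k + 1)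
    (hc : 0 < c) (hC₀ : 0 < C₀) (hα : Continuous α) (hαC : ∀ Y, C₀ ≤ α Y) (η : E) :
    exp (-(4 * c * C₀)⁻¹) * ((k + 1) * (4 * √k)⁻¹ ^ k) / √(1 + ‖η‖ ^ 2)
      ≤ ∫ Y, exp (-⟪η, (Y : E)⟫ ^ 2 / (4 * c * α Y)) ∂(volume : Measure E).toSphere := by
  have hint := integrable_exp_neg_inner_sq_div hc.ne' hα (fun Y => (hC₀.trans_le (hαC Y)).ne') η
  calc exp (-(4 * c * C₀)⁻¹) * ((k + 1) * (4 * √k)⁻¹ ^ k) / √(1 + ‖η‖ ^ 2)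
      = exp (-(4 * c * C₀)⁻¹) * ((k + 1) * (4 * √k)⁻¹ ^ k / √(1 + ‖η‖ ^ 2)) :=
        mul_div_assoc _ _ _
    _ ≤ exp (-(4 * c * C₀)⁻¹) * (volume : Measure E).toSphere.real {Y | |⟪η, (Y : E)⟫| ≤ 1} := by
        gcongr
        exact (ENNReal.ofReal_le_iff_le_toReal (measure_ne_top _ _)).1
          (ofReal_div_le_toSphere_inner_le_one hk hE η)
    _ ≤ _ := (setIntegral_ge_of_const_le_real (measurableSet_sphere_band η 1) (measure_ne_top _ _)
          (fun Y hY => exp_neg_inv_le_exp_neg_sq_div hc hC₀ (hαC Y) hY) hint.integrableOn).trans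
          (setIntegral_le_integral hint (.of_forall fun _ => (exp_pos _).le))

end GaussianAverage

/-- Two-sided bounds for the spherical average of Gaussians
`φ(η') = ∫_{S^{n−2}} exp(−|η'·Y|²/(4c α(Y))) dY` (where `S^{n−2}` is the unit sphere in
`ℝ^{n−1}`, with the standard surface measure, and `α ≥ C₀ > 0` is continuous):
`c₁ ⟨η'⟩⁻¹ ≤ φ(η') ≤ c₂`, and in particular `|η'| φ(η')` is bounded below by a positive
constant for `|η'| ≥ 1`. -/
theorem spherical_gaussian_average_bounds (n : ℕ) (hn : 3 ≤ n) (c C₀ : ℝ)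
    (hc : 0 < c) (hC₀ : 0 < C₀)
    (α : Metric.sphere (0 : EuclideanSpace ℝ (Fin (n - 1))) 1 → ℝ)
    (hα : Continuous α) (hαC : ∀ Y, C₀ ≤ α Y) :
    ∃ c₁ c₂ c₃ : ℝ, 0 < c₁ ∧ 0 < c₂ ∧ 0 < c₃ ∧
      ∀ η : EuclideanSpace ℝ (Fin (n - 1)),
        (c₁ * (Real.sqrt (1 + ‖η‖ ^ 2))⁻¹
            ≤ ∫ Y, Real.exp (-⟪η, (Y : EuclideanSpace ℝ (Fin (n - 1)))⟫ ^ 2 / (4 * c * α Y))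
                ∂((volume : Measure (EuclideanSpace ℝ (Fin (n - 1)))).toSphere))
        ∧ (∫ Y, Real.exp (-⟪η, (Y : EuclideanSpace ℝ (Fin (n - 1)))⟫ ^ 2 / (4 * c * α Y))
                ∂((volume : Measure (EuclideanSpace ℝ (Fin (n - 1)))).toSphere)) ≤ c₂
        ∧ (1 ≤ ‖η‖ →
            c₃ ≤ ‖η‖ * ∫ Y, Real.exp
                (-⟪η, (Y : EuclideanSpace ℝ (Fin (n - 1)))⟫ ^ 2 / (4 * c * α Y))
                ∂((volume : Measure (EuclideanSpace ℝ (Fin (n - 1)))).toSphere)) := by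
  obtain ⟨k, hk, hE⟩ : ∃ k, 1 ≤ k ∧ finrank ℝ (EuclideanSpace ℝ (Fin (n - 1))) = k + 1 :=
    ⟨n - 2, by omega, by rw [finrank_euclideanSpace_fin]; omega⟩
  set C := exp (-(4 * c * C₀)⁻¹) * ((k + 1) * (4 * √k)⁻¹ ^ k)
  have hlower := div_le_integral_exp_neg_inner_sq_div hk hE hc hC₀ hα hαC
  have hupper := integral_exp_neg_inner_sq_div_le (α := α) hc.le fun Y => hC₀.le.trans (hαC Y)
  refine ⟨C, _, C / 2, by positivity, ?_, by positivity,
    fun η => ⟨hlower η, hupper η, fun hη => ?_⟩⟩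
  · exact (by positivity : 0 < C / √(1 + ‖(0 : EuclideanSpace ℝ (Fin (n - 1)))‖ ^ 2)).trans_le
      ((hlower 0).trans (hupper 0))
  · have hsqrt : √(1 + ‖η‖ ^ 2) ≤ 2 * ‖η‖ := sqrt_le_iff.2 ⟨by positivity, by nlinarith⟩
    calc C / 2 = ‖η‖ * (C / (2 * ‖η‖)) := by field_simp
      _ ≤ ‖η‖ * (C / √(1 + ‖η‖ ^ 2)) := by gcongr
      _ ≤ _ := by gcongr; exact hlower η
end

section
/- For ϝ > 0, n ≥ 3, and a continuous function α : S^{n−2} → [C₀, ∞) with C₀ > 0, the function (ξ, η) ∈ ℝ × ℝ^{n−1} ↦ ∫_{S^{n−2}} ⟨ξ⟩_ϝ^{−1} exp(−|η·Ŷ|²/(4 b(ξ) α(Ŷ))) dŶ, where ⟨ξ⟩_ϝ = (ξ² + ϝ²)^{1/2} and b(ξ) = ϝ^{−1}(ξ² + ϝ²)/2, admits a lower bound c ⟨(ξ, η)⟩^{−1} with c > 0 depending only on n, ϝ, C₀ and an upper bound for α; here ⟨(ξ,η)⟩ = (1 + ξ² + |η|²)^{1/2}. -/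
/-!
Near the equator orthogonal to `e = η / ‖η‖`, i.e. on the band `|⟪e, Y⟫| ≤ t`, the inner product
`⟪η, Y⟫` is at most `‖η‖ t`, so with `t ≈ min 1 (⟨ξ⟩_ϝ / ⟨(ξ, η)⟩)` the exponent stays above `-1`
and the integral is `≳ ⟨ξ⟩_ϝ⁻¹ · |band| ≳ ⟨ξ⟩_ϝ⁻¹ · t ≳ ⟨(ξ, η)⟩⁻¹`. That the band has measure
`≳ t` comes from `toSphere s = dim · vol (cone over s)`: compressing by the factor `t` along `e`
maps a fixed ball, away from `0` and from the direction `e`, into the cone over the band, and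
multiplies volumes by `t`.
-/

noncomputable section

open MeasureTheory Metric Set Module
open scoped RealInnerProductSpace Pointwise

variable {E : Type*} [NormedAddCommGroup E] [InnerProductSpace ℝ E]

def sphereBand (e : E) (t : ℝ) : Set (sphere (0 : E) 1) := {Y | |⟪e, (Y : E)⟫| ≤ t}

theorem measurableSet_sphereBand [MeasurableSpace E] [BorelSpace E] (e : E) (t : ℝ) :
    MeasurableSet (sphereBand e t) :=
  (isClosed_le (continuous_const.inner continuous_subtype_val).abs continuous_const).measurableSet

theorem mem_Ioo_smul_sphereBand {e y : E} {t : ℝ} (hy₀ : y ≠ 0) (hy₁ : ‖y‖ < 1)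
    (hyt : |⟪e, y⟫| ≤ t * ‖y‖) : y ∈ Ioo (0 : ℝ) 1 • ((↑) '' sphereBand e t : Set E) := by
  have hy : 0 < ‖y‖ := norm_pos_iff.2 hy₀
  refine ⟨‖y‖, ⟨hy, hy₁⟩, ‖y‖⁻¹ • y,
    ⟨⟨_, mem_sphere_zero_iff_norm.2 (norm_smul_inv_norm hy₀)⟩, ?_, rfl⟩, smul_inv_smul₀ hy.ne' y⟩
  change |⟪e, ‖y‖⁻¹ • y⟫| ≤ t
  rwa [real_inner_smul_right, abs_mul, abs_inv, abs_norm, inv_mul_le_iff₀ hy, mul_comm]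

def compressAlong (e : E) (t : ℝ) : E →ₗ[ℝ] E :=
  LinearMap.id - (1 - t) • (innerₛₗ ℝ e).smulRight e

theorem compressAlong_apply (e : E) (t : ℝ) (x : E) :
    compressAlong e t x = x - ((1 - t) * ⟪e, x⟫) • e := by
  simp [compressAlong, mul_smul]

theorem inner_compressAlong {e : E} (he : ‖e‖ = 1) (t : ℝ) (x : E) :
    ⟪e, compressAlong e t x⟫ = t * ⟪e, x⟫ := by
  rw [compressAlong_apply, inner_sub_right, inner_smul_right, real_inner_self_eq_norm_sq, he]
  ring

theorem det_compressAlong {ι : Type*} [Fintype ι] [DecidableEq ι] (b : OrthonormalBasis ι ℝ E)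
    (i : ι) (t : ℝ) : LinearMap.det (compressAlong (b i) t) = t := by
  have : LinearMap.toMatrix b.toBasis b.toBasis (compressAlong (b i) t) =
      Matrix.diagonal (Function.update 1 i t) := by
    ext j k
    by_cases hik : i = k <;> by_cases hjk : j = k <;> subst_vars <;>
      simp_all [LinearMap.toMatrix_apply, compressAlong_apply, eq_comm]
  rw [← LinearMap.det_toMatrix b.toBasis, this, Matrix.det_diagonal,
    Finset.prod_update_of_mem (Finset.mem_univ i)]
  simp

theorem compressAlong_image_ball_subset {e u : E} (he : ‖e‖ = 1) (hu : ‖u‖ = 1) (heu : ⟪e, u⟫ = 0)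
    {t : ℝ} (ht₀ : 0 < t) (ht₁ : t ≤ 1) :
    compressAlong e t '' ball ((2 : ℝ)⁻¹ • u) 4⁻¹ ⊆ Ioo (0 : ℝ) 1 • ((↑) '' sphereBand e t) := by
  rintro _ ⟨x, hx, rfl⟩
  rw [mem_ball_iff_norm] at hx
  have hex : |⟪e, x⟫| < 4⁻¹ := by
    have : ⟪e, x⟫ = ⟪e, x - (2 : ℝ)⁻¹ • u⟫ := by simp [inner_sub_right, inner_smul_right, heu]
    rw [this]
    exact (abs_real_inner_le_norm _ _).trans_lt (by rw [he, one_mul]; exact hx)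
  have hx' : ‖x‖ < 2⁻¹ + 4⁻¹ := by
    calc ‖x‖ ≤ ‖(2 : ℝ)⁻¹ • u‖ + ‖x - (2 : ℝ)⁻¹ • u‖ := norm_le_norm_add_norm_sub' x _
      _ < 2⁻¹ + 4⁻¹ := by rw [norm_smul, hu]; norm_num; linarith
  have hux : 4⁻¹ < ⟪u, compressAlong e t x⟫ := by
    have : ⟪u, compressAlong e t x⟫ = 2⁻¹ + ⟪u, x - (2 : ℝ)⁻¹ • u⟫ := by
      simp [compressAlong_apply, inner_sub_right, inner_smul_right, real_inner_comm e u, heu, hu]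
    have := neg_abs_le ⟪u, x - (2 : ℝ)⁻¹ • u⟫
    have := (abs_real_inner_le_norm u (x - (2 : ℝ)⁻¹ • u)).trans_lt (by rw [hu, one_mul]; exact hx)
    linarith
  have hTx : ‖compressAlong e t x‖ < 1 := by
    calc ‖compressAlong e t x‖ ≤ ‖x‖ + |1 - t| * |⟪e, x⟫| := by
          rw [compressAlong_apply]
          refine (norm_sub_le _ _).trans_eq ?_
          rw [norm_smul, he, mul_one, Real.norm_eq_abs, abs_mul]
      _ < 1 := by
          rw [abs_of_nonneg (sub_nonneg.2 ht₁)]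
          nlinarith [abs_nonneg ⟪e, x⟫]
  have hTx₀ : 4⁻¹ < ‖compressAlong e t x‖ :=
    hux.trans_le ((real_inner_le_norm _ _).trans (by rw [hu, one_mul]))
  refine mem_Ioo_smul_sphereBand (norm_pos_iff.1 (by linarith)) hTx ?_
  rw [inner_compressAlong he, abs_mul, abs_of_pos ht₀]
  exact mul_le_mul_of_nonneg_left (hex.le.trans hTx₀.le) ht₀.le

theorem OrthonormalBasis.exists_apply_eq {ι : Type*} [Fintype ι] [FiniteDimensional ℝ E]
    (hι : finrank ℝ E = Fintype.card ι) {e : E} (he : ‖e‖ = 1) (i : ι) :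
    ∃ b : OrthonormalBasis ι ℝ E, b i = e := by
  have hortho : Orthonormal ℝ (({i} : Set ι).domRestrict fun _ ↦ e) :=
    ⟨fun _ ↦ he, fun j k hjk ↦ absurd (Subsingleton.elim j k) hjk⟩
  obtain ⟨b, hb⟩ := hortho.exists_orthonormalBasis_extension_of_card_eq hι
  exact ⟨b, hb i rfl⟩

theorem exists_pos_mul_le_toSphere_sphereBand [FiniteDimensional ℝ E] [MeasurableSpace E]
    [BorelSpace E] (μ : Measure E) [μ.IsAddHaarMeasure] (hE : 2 ≤ finrank ℝ E) :
    ∃ κ > 0, ∀ e : E, ‖e‖ = 1 → ∀ t, 0 < t → t ≤ 1 → κ * t ≤ μ.toSphere.real (sphereBand e t) := by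
  have hball : 0 < (μ (ball 0 4⁻¹)).toReal :=
    ENNReal.toReal_pos (measure_ball_pos μ 0 (by norm_num)).ne' measure_ball_lt_top.ne
  refine ⟨finrank ℝ E * (μ (ball 0 4⁻¹)).toReal, by positivity, fun e he t ht₀ ht₁ ↦ ?_⟩
  let i₀ : Fin (finrank ℝ E) := ⟨0, by omega⟩
  let i₁ : Fin (finrank ℝ E) := ⟨1, by omega⟩
  obtain ⟨b, rfl⟩ := OrthonormalBasis.exists_apply_eq (Fintype.card_fin _).symm he i₀
  have hsub := compressAlong_image_ball_subset he (b.orthonormal.1 i₁)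
    (b.orthonormal.2 (by simp [i₀, i₁])) ht₀ ht₁
  rw [measureReal_def, ← ENNReal.ofReal_le_iff_le_toReal (measure_ne_top _ _),
    μ.toSphere_apply' (measurableSet_sphereBand _ _)]
  calc ENNReal.ofReal (finrank ℝ E * (μ (ball 0 4⁻¹)).toReal * t)
      = finrank ℝ E * μ (compressAlong (b i₀) t '' ball ((2 : ℝ)⁻¹ • b i₁) 4⁻¹) := by
        rw [μ.addHaar_image_linearMap, det_compressAlong, μ.addHaar_ball_center ((2 : ℝ)⁻¹ • b i₁),
          abs_of_pos ht₀, mul_right_comm, ENNReal.ofReal_mul (by positivity),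
          ENNReal.ofReal_mul (by positivity), ENNReal.ofReal_natCast,
          ENNReal.ofReal_toReal measure_ball_lt_top.ne, mul_assoc]
    _ ≤ _ := by gcongr

theorem exists_norm_eq_one_and_eq_norm_smul [Nontrivial E] (η : E) :
    ∃ e : E, ‖e‖ = 1 ∧ η = ‖η‖ • e := by
  rcases eq_or_ne η 0 with rfl | hη
  · obtain ⟨e, he⟩ := exists_norm_eq E zero_le_one
    exact ⟨e, he, by simp⟩
  · exact ⟨‖η‖⁻¹ • η, norm_smul_inv_norm hη, by rw [smul_inv_smul₀ (norm_ne_zero_iff.2 hη)]⟩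

theorem sqrt_sq_add_sq_le_max_mul_sqrt {ϝ : ℝ} (hϝ : 0 ≤ ϝ) (ξ r : ℝ) :
    √(ξ ^ 2 + ϝ ^ 2) ≤ max ϝ 1 * √(1 + ξ ^ 2 + r ^ 2) := by
  rw [← Real.sqrt_sq (by positivity : 0 ≤ max ϝ 1), ← Real.sqrt_mul (sq_nonneg _)]
  have h₁ : 1 ≤ max ϝ 1 := le_max_right _ _
  have h₂ : ϝ ≤ max ϝ 1 := le_max_left _ _
  gcongr
  nlinarith [sq_nonneg ξ, sq_nonneg r, mul_le_mul h₁ h₁ zero_le_one (by positivity),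
    mul_le_mul h₂ h₂ hϝ (by positivity)]

theorem exists_band_width {ϝ K : ℝ} (hϝ : 0 < ϝ) (hK : 0 < K) (ξ r : ℝ) :
    ∃ t, 0 < t ∧ t ≤ 1 ∧ r * t ≤ K * √(ξ ^ 2 + ϝ ^ 2) ∧
      min (max ϝ 1)⁻¹ K * (√(1 + ξ ^ 2 + r ^ 2))⁻¹ ≤ (√(ξ ^ 2 + ϝ ^ 2))⁻¹ * t := by
  set q := √(ξ ^ 2 + ϝ ^ 2)
  set W := √(1 + ξ ^ 2 + r ^ 2)
  have hq : 0 < q := by positivity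
  have hW : 0 < W := by positivity
  have hrW : r ≤ W := Real.le_sqrt_of_sq_le (by nlinarith [sq_nonneg ξ])
  refine ⟨min 1 (K * q / W), by positivity, min_le_left _ _, ?_, ?_⟩
  · calc r * min 1 (K * q / W) ≤ W * (K * q / W) := by gcongr; exact min_le_right _ _
      _ = K * q := by field_simp
  · rw [mul_min_of_nonneg _ _ (inv_nonneg.2 hq.le), mul_one,
      show q⁻¹ * (K * q / W) = K * W⁻¹ by field_simp]
    refine le_min ?_ (by gcongr; exact min_le_right _ _)
    calc min (max ϝ 1)⁻¹ K * W⁻¹ ≤ (max ϝ 1)⁻¹ * W⁻¹ := by gcongr; exact min_le_left _ _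
      _ = (max ϝ 1 * W)⁻¹ := (mul_inv _ _).symm
      _ ≤ q⁻¹ := inv_anti₀ hq (sqrt_sq_add_sq_le_max_mul_sqrt hϝ.le ξ r)

def boundarySymbolIntegrand (ϝ ξ : ℝ) (η : E) (α : sphere (0 : E) 1 → ℝ) (Y : sphere (0 : E) 1) :
    ℝ :=
  (√(ξ ^ 2 + ϝ ^ 2))⁻¹ * Real.exp (-⟪η, (Y : E)⟫ ^ 2 / (4 * (ϝ⁻¹ * (ξ ^ 2 + ϝ ^ 2) / 2) * α Y))

theorem integrable_boundarySymbolIntegrand [MeasurableSpace E] [BorelSpace E] [ProperSpace E]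
    (μ : Measure (sphere (0 : E) 1)) [IsFiniteMeasure μ] {ϝ : ℝ} (hϝ : 0 < ϝ) (ξ : ℝ) (η : E)
    {α : sphere (0 : E) 1 → ℝ} (hα : Continuous α) (hα₀ : ∀ Y, 0 < α Y) :
    Integrable (boundarySymbolIntegrand ϝ ξ η α) μ := by
  have hcont : Continuous (boundarySymbolIntegrand ϝ ξ η α) := by
    unfold boundarySymbolIntegrand
    fun_prop (disch := exact fun Y ↦ by have := hα₀ Y; positivity)
  exact hcont.integrable_of_hasCompactSupport (.of_compactSpace _)

theorem le_boundarySymbolIntegrand_of_mem_sphereBand {ϝ C₀ ξ t : ℝ} (hϝ : 0 < ϝ) (hC₀ : 0 ≤ C₀)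
    {e η : E} (hη : η = ‖η‖ • e) (hηt : ‖η‖ * t ≤ √(2 * C₀ / ϝ) * √(ξ ^ 2 + ϝ ^ 2))
    {α : sphere (0 : E) 1 → ℝ} (hαl : ∀ Y, C₀ ≤ α Y) {Y : sphere (0 : E) 1}
    (hY : Y ∈ sphereBand e t) :
    (√(ξ ^ 2 + ϝ ^ 2))⁻¹ * Real.exp (-1) ≤ boundarySymbolIntegrand ϝ ξ η α Y := by
  have hinner : ⟪η, (Y : E)⟫ = ‖η‖ * ⟪e, (Y : E)⟫ := by
    conv_lhs => rw [hη]
    exact real_inner_smul_left _ _ _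
  have hαY : 0 ≤ α Y := hC₀.trans (hαl Y)
  unfold boundarySymbolIntegrand
  gcongr
  rw [neg_div, neg_le_neg_iff]
  refine div_le_one_of_le₀ ?_ (by positivity)
  calc ⟪η, (Y : E)⟫ ^ 2 = (‖η‖ * |⟪e, (Y : E)⟫|) ^ 2 := by rw [hinner, mul_pow, mul_pow, sq_abs]
    _ ≤ (√(2 * C₀ / ϝ) * √(ξ ^ 2 + ϝ ^ 2)) ^ 2 := by
        gcongr ?_ ^ 2
        exact (mul_le_mul_of_nonneg_left hY (norm_nonneg η)).trans hηt
    _ = 4 * (ϝ⁻¹ * (ξ ^ 2 + ϝ ^ 2) / 2) * C₀ := by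
        rw [mul_pow, Real.sq_sqrt (by positivity), Real.sq_sqrt (by positivity)]
        field_simp
        ring
    _ ≤ 4 * (ϝ⁻¹ * (ξ ^ 2 + ϝ ^ 2) / 2) * α Y := by gcongr; exact hαl Y

theorem mul_measureReal_sphereBand_le_integral [MeasurableSpace E] [BorelSpace E]
    [ProperSpace E] (μ : Measure (sphere (0 : E) 1)) [IsFiniteMeasure μ] {ϝ C₀ ξ t : ℝ}
    (hϝ : 0 < ϝ) (hC₀ : 0 < C₀) {e η : E} (hη : η = ‖η‖ • e)
    (hηt : ‖η‖ * t ≤ √(2 * C₀ / ϝ) * √(ξ ^ 2 + ϝ ^ 2)) {α : sphere (0 : E) 1 → ℝ}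
    (hα : Continuous α) (hαl : ∀ Y, C₀ ≤ α Y) :
    (√(ξ ^ 2 + ϝ ^ 2))⁻¹ * Real.exp (-1) * μ.real (sphereBand e t) ≤
      ∫ Y, boundarySymbolIntegrand ϝ ξ η α Y ∂μ := by
  have hlow : sphereBand e t ⊆
      {Y | (√(ξ ^ 2 + ϝ ^ 2))⁻¹ * Real.exp (-1) ≤ boundarySymbolIntegrand ϝ ξ η α Y} :=
    fun Y hY ↦ le_boundarySymbolIntegrand_of_mem_sphereBand hϝ hC₀.le hη hηt hαl hY
  calc _ ≤ (√(ξ ^ 2 + ϝ ^ 2))⁻¹ * Real.exp (-1) *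
        μ.real {Y | (√(ξ ^ 2 + ϝ ^ 2))⁻¹ * Real.exp (-1) ≤ boundarySymbolIntegrand ϝ ξ η α Y} := by
        gcongr
        exact measure_ne_top μ _
    _ ≤ _ := mul_meas_ge_le_integral_of_nonneg
        (ae_of_all _ fun Y ↦ by unfold boundarySymbolIntegrand; positivity)
        (integrable_boundarySymbolIntegrand μ hϝ ξ η hα fun Y ↦ hC₀.trans_le (hαl Y)) _

theorem boundary_symbol_elliptic_lower_bound_general (n : ℕ) (hn : 3 ≤ n) (ϝ C₀ : ℝ)
    (hϝ : 0 < ϝ) (hC₀ : 0 < C₀)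
    (α : Metric.sphere (0 : EuclideanSpace ℝ (Fin (n - 1))) 1 → ℝ)
    (hα : Continuous α) (hαl : ∀ Y, C₀ ≤ α Y) :
    ∃ c : ℝ, 0 < c ∧ ∀ (ξ : ℝ) (η : EuclideanSpace ℝ (Fin (n - 1))),
      c * (Real.sqrt (1 + ξ ^ 2 + ‖η‖ ^ 2))⁻¹
        ≤ ∫ Y, (Real.sqrt (ξ ^ 2 + ϝ ^ 2))⁻¹ *
            Real.exp (-⟪η, (Y : EuclideanSpace ℝ (Fin (n - 1)))⟫ ^ 2 /
              (4 * (ϝ⁻¹ * (ξ ^ 2 + ϝ ^ 2) / 2) * α Y))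
            ∂((volume : Measure (EuclideanSpace ℝ (Fin (n - 1)))).toSphere) := by
  have hdim : 2 ≤ finrank ℝ (EuclideanSpace ℝ (Fin (n - 1))) := by
    rw [finrank_euclideanSpace_fin]; omega
  have : Nontrivial (EuclideanSpace ℝ (Fin (n - 1))) :=
    Module.nontrivial_of_finrank_pos (R := ℝ) (by omega)
  obtain ⟨κ, hκ, hband⟩ := exists_pos_mul_le_toSphere_sphereBand volume hdim
  set K := √(2 * C₀ / ϝ)
  refine ⟨Real.exp (-1) * κ * min (max ϝ 1)⁻¹ K, by positivity, fun ξ η ↦ ?_⟩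
  obtain ⟨e, he, hη⟩ := exists_norm_eq_one_and_eq_norm_smul η
  obtain ⟨t, ht₀, ht₁, hηt, hbracket⟩ := exists_band_width hϝ (by positivity : 0 < K) ξ ‖η‖
  calc _ = Real.exp (-1) * κ * (min (max ϝ 1)⁻¹ K * (√(1 + ξ ^ 2 + ‖η‖ ^ 2))⁻¹) := by ring
    _ ≤ Real.exp (-1) * κ * ((√(ξ ^ 2 + ϝ ^ 2))⁻¹ * t) :=
        mul_le_mul_of_nonneg_left hbracket (by positivity)
    _ = (√(ξ ^ 2 + ϝ ^ 2))⁻¹ * Real.exp (-1) * (κ * t) := by ring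
    _ ≤ (√(ξ ^ 2 + ϝ ^ 2))⁻¹ * Real.exp (-1) * volume.toSphere.real (sphereBand e t) := by
        gcongr
        exact hband e he t ht₀ ht₁
    _ ≤ _ := mul_measureReal_sphereBand_le_integral _ hϝ hC₀ hη hηt hα hαl

/-- Elliptic lower bound for the boundary principal symbol of the conjugated normal operator
`A_ϝ`: for `ϝ > 0`, `n ≥ 3` and a continuous `α : S^{n−2} → [C₀, C₁]` with `C₀ > 0`, the
function
`(ξ, η) ↦ ∫_{S^{n−2}} ⟨ξ⟩_ϝ⁻¹ exp(−|η·Y|²/(4 b(ξ) α(Y))) dY`,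
with `⟨ξ⟩_ϝ = (ξ² + ϝ²)^{1/2}` and `b(ξ) = ϝ⁻¹(ξ² + ϝ²)/2`, is bounded below by
`c ⟨(ξ,η)⟩⁻¹` with `c > 0` depending only on `n`, `ϝ`, `C₀` and the upper bound `C₁` of `α`. -/
theorem boundary_symbol_elliptic_lower_bound (n : ℕ) (hn : 3 ≤ n) (ϝ C₀ C₁ : ℝ)
    (hϝ : 0 < ϝ) (hC₀ : 0 < C₀)
    (α : Metric.sphere (0 : EuclideanSpace ℝ (Fin (n - 1))) 1 → ℝ)
    (hα : Continuous α) (hαl : ∀ Y, C₀ ≤ α Y) (hαu : ∀ Y, α Y ≤ C₁) :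
    ∃ c : ℝ, 0 < c ∧ ∀ (ξ : ℝ) (η : EuclideanSpace ℝ (Fin (n - 1))),
      c * (Real.sqrt (1 + ξ ^ 2 + ‖η‖ ^ 2))⁻¹
        ≤ ∫ Y, (Real.sqrt (ξ ^ 2 + ϝ ^ 2))⁻¹ *
            Real.exp (-⟪η, (Y : EuclideanSpace ℝ (Fin (n - 1)))⟫ ^ 2 /
              (4 * (ϝ⁻¹ * (ξ ^ 2 + ϝ ^ 2) / 2) * α Y))
            ∂((volume : Measure (EuclideanSpace ℝ (Fin (n - 1)))).toSphere) :=
  boundary_symbol_elliptic_lower_bound_general n hn ϝ C₀ hϝ hC₀ α hα hαl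

end
end
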